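/- Let I, J, K, R be positive integers, t : (Fin I × Fin J × Fin K) → ℝ, and f(A,B,C) = ∑_{i,j,k} (t_{ijk} − ∑_{r=1}^{R} A_{ir} B_{jr} C_{kr})². Let λ̄ > 0 and λ_k ≥ λ̄ for all k, and suppose (A^k), (B^k), (C^k) satisfy the RALS descent inequalities f(A^{k+1},B^k,C^k) ≤ f(A^k,B^k,C^k) − λ_k‖A^{k+1} − A^k‖_F², f(A^{k+1},B^{k+1},C^k) ≤ f(A^{k+1},B^k,C^k) − λ_k‖B^{k+1} − B^k‖_F², f(A^{k+1},B^{k+1},C^{k+1}) ≤ f(A^{k+1},B^{k+1},C^k) − λ_k‖C^{k+1} − C^k‖_F². If a subsequence (A^{n_k}, B^{n_k}, C^{n_k}) converges to (Ā, B̄, C̄), then ‖A^{n_k+1} − A^{n_k}‖_F → 0 and ‖B^{n_k+1} − B^{n_k}‖_F → 0; consequently (A^{n_k+1}, B^{n_k}, C^{n_k}) → (Ā, B̄, C̄) and (A^{n_k+1}, B^{n_k+1}, C^{n_k}) → (Ā, B̄, C̄). -/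
import Mathlib


open Filter Topology

/-- Under the RALS descent inequalities with `λ_k ≥ λ̄ > 0`, along a
convergent subsequence `(A^{n_k},B^{n_k},C^{n_k}) → (Ā,B̄,C̄)` the Frobenius norms
`‖A^{n_k+1} − A^{n_k}‖_F` and `‖B^{n_k+1} − B^{n_k}‖_F` tend to `0`, and consequently
`(A^{n_k+1},B^{n_k},C^{n_k}) → (Ā,B̄,C̄)` and `(A^{n_k+1},B^{n_k+1},C^{n_k}) → (Ā,B̄,C̄)`. -/
theorem rals_successive_differences_tendsto_zero
    (I J K R : ℕ) (hI : 0 < I) (hJ : 0 < J) (hK : 0 < K) (hR : 0 < R)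
    (t : Fin I × Fin J × Fin K → ℝ)
    (f : (Fin I → Fin R → ℝ) → (Fin J → Fin R → ℝ) → (Fin K → Fin R → ℝ) → ℝ)
    (hf : ∀ A B C, f A B C =
      ∑ i, ∑ j, ∑ k, (t (i, j, k) - ∑ r, A i r * B j r * C k r) ^ 2)
    (lamBar : ℝ) (hlamBar : 0 < lamBar)
    (lam : ℕ → ℝ) (hlam : ∀ k, lamBar ≤ lam k)
    (A : ℕ → Fin I → Fin R → ℝ) (B : ℕ → Fin J → Fin R → ℝ) (C : ℕ → Fin K → Fin R → ℝ)
    (hA : ∀ k, f (A (k + 1)) (B k) (C k)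
        ≤ f (A k) (B k) (C k) - lam k * ∑ i, ∑ r, (A (k + 1) i r - A k i r) ^ 2)
    (hB : ∀ k, f (A (k + 1)) (B (k + 1)) (C k)
        ≤ f (A (k + 1)) (B k) (C k) - lam k * ∑ j, ∑ r, (B (k + 1) j r - B k j r) ^ 2)
    (hC : ∀ k, f (A (k + 1)) (B (k + 1)) (C (k + 1))
        ≤ f (A (k + 1)) (B (k + 1)) (C k) - lam k * ∑ kk, ∑ r, (C (k + 1) kk r - C k kk r) ^ 2)
    (n : ℕ → ℕ) (hn : StrictMono n)
    (Abar : Fin I → Fin R → ℝ) (Bbar : Fin J → Fin R → ℝ) (Cbar : Fin K → Fin R → ℝ)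
    (hconv : Tendsto (fun k => (A (n k), B (n k), C (n k))) atTop (𝓝 (Abar, Bbar, Cbar))) :
    Tendsto (fun k => Real.sqrt (∑ i, ∑ r, (A (n k + 1) i r - A (n k) i r) ^ 2))
      atTop (𝓝 0) ∧
    Tendsto (fun k => Real.sqrt (∑ j, ∑ r, (B (n k + 1) j r - B (n k) j r) ^ 2))
      atTop (𝓝 0) ∧
    Tendsto (fun k => (A (n k + 1), B (n k), C (n k))) atTop (𝓝 (Abar, Bbar, Cbar)) ∧
    Tendsto (fun k => (A (n k + 1), B (n k + 1), C (n k))) atTop (𝓝 (Abar, Bbar, Cbar)) := by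

  classical
  have hfnn : ∀ a b c, 0 ≤ f a b c := by
    intro a b c; rw [hf]; positivity
  set F : ℕ → ℝ := fun k => f (A k) (B k) (C k) with hFdef
  set SA : ℕ → ℝ := fun k => ∑ i, ∑ r, (A (k + 1) i r - A k i r) ^ 2 with hSAdef
  set SB : ℕ → ℝ := fun k => ∑ j, ∑ r, (B (k + 1) j r - B k j r) ^ 2 with hSBdef
  have hSAnn : ∀ k, 0 ≤ SA k := by intro k; positivity
  have hSBnn : ∀ k, 0 ≤ SB k := by intro k; positivity
  have hlam0 : ∀ k, 0 < lam k := fun k => hlamBar.trans_le (hlam k)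
  have key : ∀ k, lam k * SA k ≤ F k - F (k + 1) ∧ lam k * SB k ≤ F k - F (k + 1) ∧
      F (k + 1) ≤ F k := by
    intro k
    have h1 := hA k; have h2 := hB k; have h3 := hC k
    have hSCnn : 0 ≤ ∑ kk, ∑ r, (C (k + 1) kk r - C k kk r) ^ 2 := by positivity
    have p1 : 0 ≤ lam k * SA k := mul_nonneg (hlam0 k).le (hSAnn k)
    have p2 : 0 ≤ lam k * SB k := mul_nonneg (hlam0 k).le (hSBnn k)
    have p3 : 0 ≤ lam k * ∑ kk, ∑ r, (C (k + 1) kk r - C k kk r) ^ 2 :=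
      mul_nonneg (hlam0 k).le hSCnn
    refine ⟨by simp only [hFdef, hSAdef]; linarith, by simp only [hFdef, hSBdef]; linarith,
      by simp only [hFdef]; linarith⟩
  have hant : Antitone F := antitone_nat_of_succ_le fun k => (key k).2.2
  have hbdd : BddBelow (Set.range F) := ⟨0, by rintro _ ⟨k, rfl⟩; exact hfnn _ _ _⟩
  have hFconv : Tendsto F atTop (𝓝 (⨅ k, F k)) := tendsto_atTop_ciInf hant hbdd
  have hD : Tendsto (fun k => F k - F (k + 1)) atTop (𝓝 0) := by
    have h2 : Tendsto (fun k => F (k + 1)) atTop (𝓝 (⨅ k, F k)) :=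
      hFconv.comp (tendsto_add_atTop_nat 1)
    simpa using hFconv.sub h2
  have hnT : Tendsto n atTop atTop := hn.tendsto_atTop
  have hDn : Tendsto (fun k => F (n k) - F (n k + 1)) atTop (𝓝 0) := hD.comp hnT
  have hSqueeze : ∀ (S : ℕ → ℝ), (∀ k, 0 ≤ S k) → (∀ k, lam k * S k ≤ F k - F (k + 1)) →
      Tendsto (fun k => S (n k)) atTop (𝓝 0) := by
    intro S hSnn hSle
    have h1 : Tendsto (fun k => lamBar * S (n k)) atTop (𝓝 0) := by
      refine squeeze_zero (fun k => mul_nonneg hlamBar.le (hSnn _)) (fun k => ?_) hDn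
      exact le_trans (mul_le_mul_of_nonneg_right (hlam _) (hSnn _)) (hSle (n k))
    have h2 := h1.const_mul lamBar⁻¹
    simpa [← mul_assoc, inv_mul_cancel₀ hlamBar.ne'] using h2
  have hSAn : Tendsto (fun k => SA (n k)) atTop (𝓝 0) :=
    hSqueeze SA hSAnn fun k => (key k).1
  have hSBn : Tendsto (fun k => SB (n k)) atTop (𝓝 0) :=
    hSqueeze SB hSBnn fun k => (key k).2.1
  have hsA : Tendsto (fun k => Real.sqrt (SA (n k))) atTop (𝓝 0) := by
    simpa using hSAn.sqrt
  have hsB : Tendsto (fun k => Real.sqrt (SB (n k))) atTop (𝓝 0) := by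
    simpa using hSBn.sqrt
  -- coordinatewise convergence of differences
  have hAcoord : ∀ i r, Tendsto (fun k => A (n k + 1) i r - A (n k) i r) atTop (𝓝 0) := by
    intro i r
    refine squeeze_zero_norm (fun k => ?_) hsA
    rw [Real.norm_eq_abs, ← Real.sqrt_sq_eq_abs]
    refine Real.sqrt_le_sqrt ?_
    calc (A (n k + 1) i r - A (n k) i r) ^ 2
        ≤ ∑ r', (A (n k + 1) i r' - A (n k) i r') ^ 2 :=
          Finset.single_le_sum (f := fun r' => (A (n k + 1) i r' - A (n k) i r') ^ 2)
            (fun _ _ => sq_nonneg _) (Finset.mem_univ r)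
      _ ≤ SA (n k) := Finset.single_le_sum
          (f := fun i' => ∑ r', (A (n k + 1) i' r' - A (n k) i' r') ^ 2)
          (fun _ _ => Finset.sum_nonneg fun _ _ => sq_nonneg _) (Finset.mem_univ i)
  have hBcoord : ∀ j r, Tendsto (fun k => B (n k + 1) j r - B (n k) j r) atTop (𝓝 0) := by
    intro j r
    refine squeeze_zero_norm (fun k => ?_) hsB
    rw [Real.norm_eq_abs, ← Real.sqrt_sq_eq_abs]
    refine Real.sqrt_le_sqrt ?_
    calc (B (n k + 1) j r - B (n k) j r) ^ 2
        ≤ ∑ r', (B (n k + 1) j r' - B (n k) j r') ^ 2 :=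
          Finset.single_le_sum (f := fun r' => (B (n k + 1) j r' - B (n k) j r') ^ 2)
            (fun _ _ => sq_nonneg _) (Finset.mem_univ r)
      _ ≤ SB (n k) := Finset.single_le_sum
          (f := fun j' => ∑ r', (B (n k + 1) j' r' - B (n k) j' r') ^ 2)
          (fun _ _ => Finset.sum_nonneg fun _ _ => sq_nonneg _) (Finset.mem_univ j)
  -- components of hconv
  have hA0 : Tendsto (fun k => A (n k)) atTop (𝓝 Abar) :=
    (continuous_fst.tendsto _).comp hconv
  have hBC : Tendsto (fun k => (B (n k), C (n k))) atTop (𝓝 (Bbar, Cbar)) :=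
    (continuous_snd.tendsto _).comp hconv
  have hB0 : Tendsto (fun k => B (n k)) atTop (𝓝 Bbar) :=
    (continuous_fst.tendsto _).comp hBC
  have hC0 : Tendsto (fun k => C (n k)) atTop (𝓝 Cbar) :=
    (continuous_snd.tendsto _).comp hBC
  have hA1 : Tendsto (fun k => A (n k + 1)) atTop (𝓝 Abar) := by
    rw [tendsto_pi_nhds]; intro i; rw [tendsto_pi_nhds]; intro r
    have h0 : Tendsto (fun k => A (n k) i r) atTop (𝓝 (Abar i r)) :=
      tendsto_pi_nhds.1 (tendsto_pi_nhds.1 hA0 i) r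
    have := (hAcoord i r).add h0
    simpa using this
  have hB1 : Tendsto (fun k => B (n k + 1)) atTop (𝓝 Bbar) := by
    rw [tendsto_pi_nhds]; intro j; rw [tendsto_pi_nhds]; intro r
    have h0 : Tendsto (fun k => B (n k) j r) atTop (𝓝 (Bbar j r)) :=
      tendsto_pi_nhds.1 (tendsto_pi_nhds.1 hB0 j) r
    have := (hBcoord j r).add h0
    simpa using this
  exact ⟨hsA, hsB, hA1.prodMk_nhds (hB0.prodMk_nhds hC0),
    hA1.prodMk_nhds (hB1.prodMk_nhds hC0)⟩
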